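/- Bound on the upper incomplete gamma function (Claim B.1): For all real s ≥ 1 and x ≥ 0, the upper incomplete gamma function Γ(s, x) = ∫_x^∞ e^{−t} t^{s−1} dt satisfies Γ(s, x) ≤ e^{−x} (x + s)^{s−1}. -/
import Mathlib

open MeasureTheory

open Real Set Filter Topology in
lemma aux_exp_integral_Ioi (b x : ℝ) (hb : 0 < b) :
    ∫ t in Set.Ioi x, Real.exp (-b * t) = Real.exp (-b * x) / b := by
  have hderiv : ∀ t ∈ Set.Ici x, HasDerivAt (fun t => -Real.exp (-b * t) / b)
      (Real.exp (-b * t)) t := by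
    intro t _
    simpa [hb.ne'] using ((hasDerivAt_id t).const_mul b).neg.exp.neg.div_const b
  have htend : Tendsto (fun t => -Real.exp (-b * t) / b) atTop (𝓝 0) := by
    have h : Tendsto (fun t => -Real.exp (-b * t) / b) atTop (𝓝 (-0 / b)) := by
      refine Tendsto.div_const (Tendsto.neg ?_) _
      exact tendsto_exp_atBot.comp (tendsto_id.const_mul_atTop_of_neg (neg_neg_iff_pos.2 hb))
    simpa using h
  have h := integral_Ioi_of_hasDerivAt_of_tendsto' hderiv (exp_neg_integrableOn_Ioi x hb) htend
  rw [h]; ring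

/-- Bound on the upper incomplete gamma function: for `s ≥ 1`, `x ≥ 0`,
`Γ(s, x) = ∫_x^∞ e^{-t} t^{s-1} dt ≤ e^{-x} (x + s)^{s-1}`. -/
theorem stmt_3 (s x : ℝ) (hs : 1 ≤ s) (hx : 0 ≤ x) :
    (∫ t in Set.Ioi x, Real.exp (-t) * t ^ (s - 1)) ≤ Real.exp (-x) * (x + s) ^ (s - 1) := by
  set c : ℝ := x + s with hc_def
  have hc : 0 < c := by positivity
  set a : ℝ := (s - 1) / c with ha_def
  have ha0 : 0 ≤ a := div_nonneg (by linarith) hc.le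
  have hac : a * c = s - 1 := by rw [ha_def, div_mul_cancel₀ _ hc.ne']
  have hb : 0 < 1 - a := by
    have : a < 1 := by
      rw [ha_def, div_lt_one hc]; linarith
    linarith
  set K : ℝ := c ^ (s - 1) * Real.exp (-(s - 1)) with hK_def
  have hcpow : (0:ℝ) < c ^ (s - 1) := by positivity
  -- pointwise bound
  have hpt : ∀ t ∈ Set.Ioi x, Real.exp (-t) * t ^ (s - 1) ≤ K * Real.exp (-(1 - a) * t) := by
    intro t ht
    have ht0 : 0 < t := lt_of_le_of_lt hx ht
    have hlog : Real.log t ≤ Real.log c + t / c - 1 := by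
      have h1 : Real.log (t / c) ≤ t / c - 1 :=
        Real.log_le_sub_one_of_pos (by positivity)
      rw [Real.log_div ht0.ne' hc.ne'] at h1
      linarith
    have h2 : (s - 1) * Real.log t ≤ (s - 1) * Real.log c + a * t - (s - 1) := by
      have h := mul_le_mul_of_nonneg_left hlog (show (0:ℝ) ≤ s - 1 by linarith)
      have hat : (s - 1) * (t / c) = a * t := by rw [ha_def]; ring
      nlinarith [h, hat]
    have h3 : t ^ (s - 1) ≤ c ^ (s - 1) * Real.exp (a * t - (s - 1)) := by
      rw [Real.rpow_def_of_pos ht0, Real.rpow_def_of_pos hc, ← Real.exp_add]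
      exact Real.exp_le_exp.2 (by linarith)
    have e1 : Real.exp (-t) * Real.exp (a * t - (s - 1))
        = Real.exp (-(s - 1)) * Real.exp (-(1 - a) * t) := by
      rw [← Real.exp_add, ← Real.exp_add]; congr 1; ring
    calc Real.exp (-t) * t ^ (s - 1)
        ≤ Real.exp (-t) * (c ^ (s - 1) * Real.exp (a * t - (s - 1))) :=
          mul_le_mul_of_nonneg_left h3 (Real.exp_pos _).le
      _ = c ^ (s - 1) * (Real.exp (-t) * Real.exp (a * t - (s - 1))) := by ring
      _ = K * Real.exp (-(1 - a) * t) := by rw [e1, hK_def]; ring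
  -- integrability
  have hint1 : IntegrableOn (fun t => Real.exp (-t) * t ^ (s - 1)) (Set.Ioi x) :=
    (Real.GammaIntegral_convergent (by linarith : (0:ℝ) < s)).mono_set
      (Set.Ioi_subset_Ioi hx)
  have hint2 : IntegrableOn (fun t => K * Real.exp (-(1 - a) * t)) (Set.Ioi x) :=
    (exp_neg_integrableOn_Ioi x hb).const_mul K
  have hmono := setIntegral_mono_on hint1 hint2 measurableSet_Ioi hpt
  have hval : (∫ t in Set.Ioi x, K * Real.exp (-(1 - a) * t))
      = K * (Real.exp (-(1 - a) * x) / (1 - a)) := by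
    rw [MeasureTheory.integral_const_mul, aux_exp_integral_Ioi _ _ hb]
  rw [hval] at hmono
  refine hmono.trans ?_
  -- final bound: K * exp(-(1-a)x)/(1-a) ≤ exp(-x) * c^(s-1)
  have hkey : Real.exp (-(a * s)) ≤ 1 - a := by
    have h1 : 1 + a * s ≤ Real.exp (a * s) := by
      have := Real.add_one_le_exp (a * s); linarith
    have hs1 : 1 ≤ s * (1 - a) := by
      have h1a : (1 - a) * c = x + 1 := by
        have h := hac
        rw [hc_def] at h ⊢
        linear_combination -h
      nlinarith [h1a, hc, hs, hx, mul_nonneg (sub_nonneg.2 hs) hx]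
    have h2 : 1 ≤ (1 - a) * Real.exp (a * s) := by
      nlinarith [Real.exp_pos (a * s)]
    have h3 : Real.exp (-(a * s)) * Real.exp (a * s) = 1 := by
      rw [← Real.exp_add]; simp
    nlinarith [Real.exp_pos (a * s), Real.exp_pos (-(a * s))]
  have hax : a * x - (s - 1) = -(a * s) := by
    have h : a * x = a * c - a * s := by rw [hc_def]; ring
    linarith [hac, h]
  have hexp : Real.exp (-(s - 1)) * Real.exp (-(1 - a) * x) ≤ (1 - a) * Real.exp (-x) := by
    rw [← Real.exp_add]
    have h : -(s - 1) + -(1 - a) * x = (a * x - (s - 1)) + -x := by ring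
    rw [h, hax, Real.exp_add]
    exact mul_le_mul_of_nonneg_right hkey (Real.exp_pos _).le
  rw [hK_def]
  calc c ^ (s - 1) * Real.exp (-(s - 1)) * (Real.exp (-(1 - a) * x) / (1 - a))
      = c ^ (s - 1) * (Real.exp (-(s - 1)) * Real.exp (-(1 - a) * x)) / (1 - a) := by ring
    _ ≤ c ^ (s - 1) * ((1 - a) * Real.exp (-x)) / (1 - a) := by gcongr
    _ = Real.exp (-x) * c ^ (s - 1) := by field_simp
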